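/- In the platform-choice game with reward functions R₁, R₂ each strictly increasing or constant, if at least one of R₁, R₂ is strictly increasing, then the set of pure Nash equilibria is a subset of {all users choose platform 1, all users choose platform 2}. -/
import Mathlib


open Finset

/-- Number of users choosing platform 1 (encoded as `false`). -/
def count1 {N : ℕ} (p : Fin N → Bool) : ℕ := (univ.filter fun i => p i = false).card

/-- Number of users choosing platform 2 (encoded as `true`). -/
def count2 {N : ℕ} (p : Fin N → Bool) : ℕ := (univ.filter fun i => p i = true).card

/-- Utility of user `i`: reward of their platform evaluated at that platform's user count. -/
def util {N : ℕ} (R1 R2 : ℕ → ℝ) (p : Fin N → Bool) (i : Fin N) : ℝ :=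
  if p i then R2 (count2 p) else R1 (count1 p)

/-- Pure-strategy Nash equilibrium of the user platform-choice game. -/
def userNash {N : ℕ} (R1 R2 : ℕ → ℝ) (p : Fin N → Bool) : Prop :=
  ∀ i, util R1 R2 (Function.update p i (!(p i))) i ≤ util R1 R2 p i

/-- `R` is strictly increasing on `{1,...,N}`. -/
def StrictIncrOn (R : ℕ → ℝ) (N : ℕ) : Prop :=
  ∀ m n, 1 ≤ m → m < n → n ≤ N → R m < R n

/-- `R` is constant on `{1,...,N}`. -/
def ConstOn (R : ℕ → ℝ) (N : ℕ) : Prop :=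
  ∀ m n, 1 ≤ m → m ≤ N → 1 ≤ n → n ≤ N → R m = R n

lemma count_sum {N : ℕ} (p : Fin N → Bool) : count1 p + count2 p = N := by
  classical
  have := Finset.card_filter_add_card_filter_not
    (s := (univ : Finset (Fin N))) (p := fun i => p i = false)
  simpa [count1, count2, Bool.not_eq_false] using this

lemma count2_update {N : ℕ} (p : Fin N → Bool) (i : Fin N) (hi : p i = false) :
    count2 (Function.update p i true) = count2 p + 1 := by
  classical
  have hset : (univ.filter fun k => Function.update p i true k = true)
      = insert i (univ.filter fun k => p k = true) := by
    ext k
    by_cases hk : k = i <;> simp [Function.update, hk, hi]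
  have hnot : i ∉ (univ.filter fun k => p k = true) := by simp [hi]
  rw [count2, count2, hset, Finset.card_insert_of_notMem hnot]

lemma count1_update {N : ℕ} (p : Fin N → Bool) (i : Fin N) (hi : p i = true) :
    count1 (Function.update p i false) = count1 p + 1 := by
  classical
  have hset : (univ.filter fun k => Function.update p i false k = false)
      = insert i (univ.filter fun k => p k = false) := by
    ext k
    by_cases hk : k = i <;> simp [Function.update, hk, hi]
  have hnot : i ∉ (univ.filter fun k => p k = false) := by simp [hi]
  rw [count1, count1, hset, Finset.card_insert_of_notMem hnot]

/-- if each reward function is strictly increasing or constant and at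
least one is strictly increasing, every pure user Nash equilibrium has all users on the
same platform. -/
theorem nash_subset_unanimous (N : ℕ) (hN : 1 ≤ N) (R1 R2 : ℕ → ℝ)
    (h1 : StrictIncrOn R1 N ∨ ConstOn R1 N) (h2 : StrictIncrOn R2 N ∨ ConstOn R2 N)
    (hone : StrictIncrOn R1 N ∨ StrictIncrOn R2 N)
    (p : Fin N → Bool) (hp : userNash R1 R2 p) :
    p = (fun _ => false) ∨ p = (fun _ => true) := by
  classical
  by_contra hcon
  push_neg at hcon
  obtain ⟨hf, ht⟩ := hcon
  have hj : ∃ j, p j = true := by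
    by_contra h
    push_neg at h
    exact hf (funext fun k => by simpa using h k)
  have hi : ∃ i, p i = false := by
    by_contra h
    push_neg at h
    exact ht (funext fun k => by simpa [Bool.not_eq_false] using h k)
  obtain ⟨i, hi⟩ := hi
  obtain ⟨j, hj⟩ := hj
  have hc1 : 1 ≤ count1 p := Finset.card_pos.mpr ⟨i, by simp [hi]⟩
  have hc2 : 1 ≤ count2 p := Finset.card_pos.mpr ⟨j, by simp [hj]⟩
  have hsum := count_sum p
  have hc1N : count1 p + 1 ≤ N := by omega
  have hc2N : count2 p + 1 ≤ N := by omega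
  -- i's no-deviation: R2(count2+1) ≤ R1(count1)
  have hA : R2 (count2 p + 1) ≤ R1 (count1 p) := by
    have := hp i
    rw [util, util] at this
    simp only [hi, Bool.not_false] at this
    rwa [if_pos (by simp [Function.update]), if_neg (by simp [hi]),
      count2_update p i hi] at this
  -- j's no-deviation: R1(count1+1) ≤ R2(count2)
  have hB : R1 (count1 p + 1) ≤ R2 (count2 p) := by
    have := hp j
    rw [util, util] at this
    simp only [hj, Bool.not_true] at this
    rwa [if_neg (by simp [Function.update]), if_pos (by simp [hj]),
      count1_update p j hj] at this
  have hR1 : R1 (count1 p) ≤ R1 (count1 p + 1) := by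
    rcases h1 with h | h
    · exact le_of_lt (h _ _ hc1 (Nat.lt_succ_self _) hc1N)
    · exact le_of_eq (h _ _ hc1 (by omega) (by omega) hc1N)
  have hR2 : R2 (count2 p) ≤ R2 (count2 p + 1) := by
    rcases h2 with h | h
    · exact le_of_lt (h _ _ hc2 (Nat.lt_succ_self _) hc2N)
    · exact le_of_eq (h _ _ hc2 (by omega) (by omega) hc2N)
  rcases hone with h | h
  · have : R1 (count1 p) < R1 (count1 p + 1) := h _ _ hc1 (Nat.lt_succ_self _) hc1N
    linarith
  · have : R2 (count2 p) < R2 (count2 p + 1) := h _ _ hc2 (Nat.lt_succ_self _) hc2N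
    linarith
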